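/- arXiv:2511.17503 — 2 statements merged into one kernel-verified Lean document; each statement's English description precedes it below -/
import Mathlib

section
/- Let C be a k-dimensional subspace of F_{q^2}^n that is Hermitian self-orthogonal (C ⊆ C^{⊥_h}) with n > 2k+1, where the Hermitian inner product is ⟨α,β⟩_h = Σ a_i^q b_i. Then there exists a (k+1)-dimensional Hermitian self-orthogonal subspace C' of F_{q^2}^n with C ⊆ C'. -/
/-!
Let `σ x = x ^ q`, an involution of `𝔽_{q²}`; the form `⟨x, y⟩ = ∑ σ (x i) * y i` is
`σ`-sesquilinear and Hermitian, and the norm `t ↦ t ^ (q + 1)` maps onto the fixed field `𝔽_q`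
because `𝔽_{q²}ˣ` is cyclic of order `(q + 1)(q - 1)`. The Hermitian dual `C^⊥` has dimension
at least `n - k ≥ k + 2`, so it contains `u, w` independent modulo `C`. Either `u` is isotropic,
or, after orthogonalising `w` to `w'` against `u`, either `w'` is isotropic or `u + t • w'` is,
for `t ^ (q + 1) = -⟨u, u⟩ / ⟨w', w'⟩`. Adjoining that isotropic vector to `C` gives `C'`.
-/

open Module

namespace Submodule

variable {K V : Type*} [Field K] [AddCommGroup V] [Module K V] {σ : K →+* K}
  {B : V →ₛₗ[σ] V →ₗ[K] K}

theorem finrank_le_finrank_add_finrank_orthogonalBilin [FiniteDimensional K V]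
    (B : V →ₛₗ[σ] V →ₗ[K] K) (N : Submodule K V) :
    finrank K V ≤ finrank K N + finrank K (N.orthogonalBilin B) := by
  let b := Module.finBasis K N
  let L : V →ₗ[K] Fin (finrank K N) → K := LinearMap.pi fun j => B (b j)
  have hker : LinearMap.ker L = N.orthogonalBilin B := by
    ext y
    simp only [LinearMap.mem_ker, mem_orthogonalBilin_iff, funext_iff, L, LinearMap.pi_apply,
      Pi.zero_apply]
    refine ⟨fun h x hx => ?_, fun h j => h _ (b j).2⟩
    have hy : (B.flip y).comp N.subtype = 0 := b.ext h
    exact LinearMap.congr_fun hy ⟨x, hx⟩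
  have hrange : finrank K (LinearMap.range L) ≤ finrank K N :=
    (finrank_le _).trans (Module.finrank_fin_fun K).le
  have := LinearMap.finrank_range_add_finrank_ker L
  rw [hker] at this
  omega

theorem mem_orthogonalBilin_sup_span_singleton {N : Submodule K V} {v y : V} :
    y ∈ (N ⊔ K ∙ v).orthogonalBilin B ↔ y ∈ N.orthogonalBilin B ∧ B v y = 0 := by
  refine ⟨fun h => ⟨orthogonalBilin_le le_sup_left h,
    h v (mem_sup_right (mem_span_singleton_self v))⟩, fun ⟨hN, hv⟩ x hx => ?_⟩
  obtain ⟨n, hn, z, hz, rfl⟩ := mem_sup.1 hx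
  obtain ⟨r, rfl⟩ := mem_span_singleton.1 hz
  simp [hN n hn, hv]

theorem sup_span_singleton_le_orthogonalBilin (hB : B.IsRefl) {N : Submodule K V} {v : V}
    (hN : N ≤ N.orthogonalBilin B) (hv : v ∈ N.orthogonalBilin B) (hvv : B v v = 0) :
    N ⊔ K ∙ v ≤ (N ⊔ K ∙ v).orthogonalBilin B := by
  refine sup_le (fun y hy => ?_) ((span_singleton_le_iff_mem _ _).2 ?_)
  · exact mem_orthogonalBilin_sup_span_singleton.2 ⟨hN hy, hB _ _ (hv y hy)⟩
  · exact mem_orthogonalBilin_sup_span_singleton.2 ⟨hv, hvv⟩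

end Submodule

namespace LinearMap

open Submodule

variable {K V : Type*} [Field K] [AddCommGroup V] [Module K V] {σ : K →+* K}
  {B : V →ₛₗ[σ] V →ₗ[K] K}

theorem IsRefl.apply_add_smul_self (hB : B.IsRefl) {u w : V} (huw : B u w = 0) (t : K) :
    B (u + t • w) (u + t • w) = B u u + σ t * t * B w w := by
  simp [huw, hB _ _ huw, mul_assoc]

theorem IsSymm.exists_apply_self_eq_zero_of_notMem (hB : B.IsSymm)
    (hσ : ∀ s, σ s = s → ∃ t, σ t * t = s) {N W : Submodule K V} {u w : V}
    (huW : u ∈ W) (hwW : w ∈ W) (hu : u ∉ N) (hw : w ∉ N ⊔ K ∙ u) :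
    ∃ v ∈ W, v ∉ N ∧ B v v = 0 := by
  set α := B u u
  by_cases hα : α = 0
  · exact ⟨u, huW, hu, hα⟩
  set w' := w - (α⁻¹ * B u w) • u
  have huw' : B u w' = 0 := by
    simp only [w', map_sub, map_smul, smul_eq_mul]
    field_simp
    ring
  have hw' : w' ∉ N ⊔ K ∙ u := fun h => hw <| by
    simpa [w'] using add_mem h
      (mem_sup_right (smul_mem _ (α⁻¹ * B u w) (mem_span_singleton_self u)))
  have hw'W : w' ∈ W := sub_mem hwW (W.smul_mem _ huW)
  set β := B w' w'
  by_cases hβ : β = 0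
  · exact ⟨w', hw'W, fun h => hw' (mem_sup_left h), hβ⟩
  have hfix : σ (-(α / β)) = -(α / β) := by
    rw [map_neg, map_div₀, hB.eq, hB.eq]
  obtain ⟨t, ht⟩ := hσ _ hfix
  have ht0 : t ≠ 0 := by
    rintro rfl
    exact neg_ne_zero.2 (div_ne_zero hα hβ) (by simpa using ht.symm)
  refine ⟨u + t • w', add_mem huW (W.smul_mem _ hw'W), fun h => hw' ?_, ?_⟩
  · have htw' : t • w' ∈ N ⊔ K ∙ u := by
      simpa using sub_mem (mem_sup_left h) (mem_sup_right (mem_span_singleton_self u))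
    exact (smul_mem_iff _ ht0).1 htw'
  · rw [hB.isRefl.apply_add_smul_self huw', ht]
    field_simp
    ring

theorem IsSymm.exists_selfOrthogonal_extension [FiniteDimensional K V] (hB : B.IsSymm)
    (hσ : ∀ s, σ s = s → ∃ t, σ t * t = s) {N : Submodule K V} (hN : N ≤ N.orthogonalBilin B)
    (hdim : 2 * finrank K N + 2 ≤ finrank K V) :
    ∃ N' : Submodule K V, N ≤ N' ∧ finrank K N' = finrank K N + 1 ∧
      N' ≤ N'.orthogonalBilin B := by
  have hW : finrank K N + 2 ≤ finrank K (N.orthogonalBilin B) := by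
    have := N.finrank_le_finrank_add_finrank_orthogonalBilin B
    omega
  obtain ⟨u, huW, hu⟩ := SetLike.exists_of_lt (lt_of_le_of_finrank_lt_finrank hN (by omega))
  have hNu : N ⊔ K ∙ u ≤ N.orthogonalBilin B :=
    sup_le hN ((span_singleton_le_iff_mem _ _).2 huW)
  obtain ⟨w, hwW, hw⟩ := SetLike.exists_of_lt (lt_of_le_of_finrank_lt_finrank hNu
    (by rw [finrank_sup_span_singleton hu]; omega))
  obtain ⟨v, hvW, hv, hvv⟩ := hB.exists_apply_self_eq_zero_of_notMem hσ huW hwW hu hw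
  exact ⟨N ⊔ K ∙ v, le_sup_left, finrank_sup_span_singleton hv,
    sup_span_singleton_le_orthogonalBilin hB.isRefl hN hvW hvv⟩

end LinearMap

theorem IsCyclic.exists_pow_eq_of_pow_eq_one {G : Type*} [Group G] [IsCyclic G] [Finite G]
    {a b : ℕ} (hG : Nat.card G = a * b) {s : G} (hs : s ^ b = 1) : ∃ t : G, t ^ a = s := by
  obtain ⟨g, hg⟩ := IsCyclic.exists_generator (α := G)
  obtain ⟨m, rfl⟩ := mem_powers_iff_mem_zpowers.2 (hg s)
  have hb : 0 < b := Nat.pos_of_mul_pos_left (hG ▸ Nat.card_pos)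
  have hab : a * b ∣ m * b := by
    rw [← hG, ← orderOf_eq_card_of_forall_mem_zpowers hg]
    exact orderOf_dvd_of_pow_eq_one (by rwa [pow_mul])
  obtain ⟨r, rfl⟩ := Nat.dvd_of_mul_dvd_mul_right hb hab
  exact ⟨g ^ r, by rw [← pow_mul, mul_comm]⟩

theorem FiniteField.exists_pow_mul_self_eq {K : Type*} [Field K] [Fintype K] {q : ℕ}
    (hK : Fintype.card K = q ^ 2) {s : K} (hs : s ^ q = s) : ∃ t : K, t ^ q * t = s := by
  have hq : q ≠ 0 := by
    rintro rfl
    exact Fintype.card_ne_zero (hK.trans (zero_pow two_ne_zero))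
  rcases eq_or_ne s 0 with rfl | hs0
  · exact ⟨0, mul_zero _⟩
  have hcard : Nat.card Kˣ = (q + 1) * (q - 1) := by
    rw [Nat.card_units, Nat.card_eq_fintype_card, hK, ← Nat.sq_sub_sq, one_pow]
  have hs1 : Units.mk0 s hs0 ^ (q - 1) = 1 := by
    ext
    refine mul_left_cancel₀ hs0 ?_
    rw [Units.val_pow_eq_pow_val, Units.val_mk0, ← pow_succ', Nat.sub_add_cancel (by omega), hs,
      Units.val_one, mul_one]
  obtain ⟨t, ht⟩ := IsCyclic.exists_pow_eq_of_pow_eq_one hcard hs1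
  exact ⟨t, by rw [← pow_succ, ← Units.val_pow_eq_pow_val, ht, Units.val_mk0]⟩

section HermitianForm

variable {K ι : Type*} [Field K] [Fintype ι]

def hermitianForm (σ : K →+* K) : (ι → K) →ₛₗ[σ] (ι → K) →ₗ[K] K :=
  LinearMap.mk₂'ₛₗ σ (RingHom.id K) (fun x y => ∑ i, σ (x i) * y i)
    (fun _ _ _ => by simp only [Pi.add_apply, map_add, add_mul, Finset.sum_add_distrib])
    (fun _ _ _ => by simp only [Pi.smul_apply, smul_eq_mul, map_mul, mul_assoc, Finset.mul_sum])
    (fun _ _ _ => by simp only [Pi.add_apply, mul_add, Finset.sum_add_distrib])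
    (fun _ _ _ => by
      simp only [Pi.smul_apply, smul_eq_mul, RingHom.id_apply, Finset.mul_sum, mul_left_comm])

theorem hermitianForm_apply (σ : K →+* K) (x y : ι → K) :
    hermitianForm σ x y = ∑ i, σ (x i) * y i := rfl

theorem hermitianForm_isSymm {σ : K →+* K} (hσ : ∀ a, σ (σ a) = a) :
    (hermitianForm (ι := ι) σ).IsSymm :=
  LinearMap.isSymm_def.2 fun x y => by
    simp only [hermitianForm_apply, map_sum, map_mul, hσ, mul_comm]

end HermitianForm

/-- a k-dimensional Hermitian self-orthogonal subspace of F_{q^2}^n with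
n > 2k+1 extends to a (k+1)-dimensional Hermitian self-orthogonal subspace. -/
theorem stmt3 (q : ℕ) (hq : ∃ p e : ℕ, p.Prime ∧ 0 < e ∧ q = p ^ e)
    (K : Type) [Field K] [Fintype K] (hK : Fintype.card K = q ^ 2)
    (n k : ℕ) (hn : n > 2 * k + 1)
    (C : Submodule K (Fin n → K)) (hdim : Module.finrank K C = k)
    (hso : ∀ x ∈ C, ∀ y ∈ C, ∑ i, (x i) ^ q * y i = 0) :
    ∃ C' : Submodule K (Fin n → K), C ≤ C' ∧ Module.finrank K C' = k + 1 ∧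
      ∀ x ∈ C', ∀ y ∈ C', ∑ i, (x i) ^ q * y i = 0 := by
  obtain ⟨p, e, hp, -, rfl⟩ := hq
  have : Fact p.Prime := ⟨hp⟩
  have : CharP K p := charP_of_card_eq_prime_pow (hK.trans (pow_mul p e 2).symm)
  set σ := iterateFrobenius K p e
  have hσ : ∀ a, σ a = a ^ p ^ e := fun _ => rfl
  have hinv : ∀ a, σ (σ a) = a := fun a => by
    rw [hσ, hσ, ← pow_mul, ← sq, ← hK, FiniteField.pow_card]
  have hnorm : ∀ s, σ s = s → ∃ t, σ t * t = s := fun s hs => by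
    simpa only [hσ] using FiniteField.exists_pow_mul_self_eq hK ((hσ s).symm.trans hs)
  have hB : ∀ x y : Fin n → K, hermitianForm σ x y = ∑ i, x i ^ p ^ e * y i := fun x y => by
    simp only [hermitianForm_apply, hσ]
  have hC : C ≤ C.orthogonalBilin (hermitianForm σ) := fun y hy x hx =>
    (hB x y).trans (hso x hx y hy)
  obtain ⟨C', hCC', hdim', hC'⟩ := (hermitianForm_isSymm hinv).exists_selfOrthogonal_extension
    hnorm hC (by rw [hdim, Module.finrank_fin_fun]; omega)
  exact ⟨C', hCC', hdim ▸ hdim', fun x hx y hy => (hB x y).symm.trans (hC' hy x hx)⟩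
end

section
/- Let q = p^m with p an odd prime, and let C be a k-dimensional Euclidean self-orthogonal subspace of F_q^n with n ≥ 2k+3. Then there exists a (k+1)-dimensional Euclidean self-orthogonal subspace C' of F_q^n containing C. -/
/-!
The orthogonal of `C` has dimension at least `n - k`, so a complement of `C` inside it has
dimension at least `n - 2k ≥ 3`. On that complement `x ↦ ⟨x, x⟩` is a polynomial of degree 2 in at
least 3 variables, so by Chevalley–Warning it has a nonzero zero `v`. Then `v ∉ C` is orthogonal to
`C` and to itself, and `C + F v` is self-orthogonal of dimension `k + 1`.
-/

open Module
open LinearMap (BilinForm)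

theorem MvPolynomial.exists_ne_zero_eval_eq_zero {K σ : Type*} [Field K] [Fintype K]
    [Fintype σ] {f : MvPolynomial σ K}
    (hdeg : f.totalDegree < Fintype.card σ) (hf : eval 0 f = 0) :
    ∃ x ≠ 0, eval x f = 0 := by
  classical
  have hdvd := char_dvd_card_solutions (ringChar K) hdeg
  have hpos : 0 < Fintype.card { x : σ → K // eval x f = 0 } :=
    Fintype.card_pos_iff.mpr ⟨⟨0, hf⟩⟩
  have hone : 1 < Fintype.card { x : σ → K // eval x f = 0 } :=
    (CharP.char_is_prime K (ringChar K)).one_lt.trans_le (Nat.le_of_dvd hpos hdvd)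
  obtain ⟨⟨x, hx⟩, hx0⟩ := Fintype.exists_ne_of_one_lt_card hone ⟨0, hf⟩
  exact ⟨x, fun h => hx0 (Subtype.ext h), hx⟩

namespace LinearMap.BilinForm

section Orthogonal

variable {R M : Type*} [CommRing R] [AddCommGroup M] [Module R M] {B : BilinForm R M}

theorem orthogonal_sup (N L : Submodule R M) :
    B.orthogonal (N ⊔ L) = B.orthogonal N ⊓ B.orthogonal L := by
  refine le_antisymm (le_inf (orthogonal_le le_sup_left) (orthogonal_le le_sup_right)) ?_
  rintro m ⟨hN, hL⟩ x hx
  obtain ⟨y, hy, z, hz, rfl⟩ := Submodule.mem_sup.mp hx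
  simp [hN y hy, hL z hz]

theorem sup_span_singleton_le_orthogonal (hB : B.IsRefl) {C : Submodule R M}
    (hC : C ≤ B.orthogonal C) {v : M} (hvC : v ∈ B.orthogonal C) (hv : B v v = 0) :
    C ⊔ R ∙ v ≤ B.orthogonal (C ⊔ R ∙ v) := by
  have hCv : C ≤ B.orthogonal (R ∙ v) := fun c hc n hn => by
    obtain ⟨a, rfl⟩ := Submodule.mem_span_singleton.mp hn
    simp [hB.eq_zero (hvC c hc)]
  have hvv : v ∈ B.orthogonal (R ∙ v) := fun n hn => by
    obtain ⟨a, rfl⟩ := Submodule.mem_span_singleton.mp hn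
    simp [hv]
  rw [orthogonal_sup]
  exact sup_le (le_inf hC hCv) ((Submodule.span_singleton_le_iff_mem _ _).mpr ⟨hvC, hvv⟩)

end Orthogonal

variable {K V : Type*} [Field K] [Fintype K] [AddCommGroup V] [Module K V] [FiniteDimensional K V]

open MvPolynomial in
theorem exists_ne_zero_apply_self_eq_zero (B : BilinForm K V) (hV : 2 < finrank K V) :
    ∃ v ≠ 0, B v v = 0 := by
  have b := Module.finBasis K V
  let P : MvPolynomial (Fin (finrank K V)) K := ∑ i, ∑ j, C (B (b i) (b j)) * X i * X j
  have hP : ∀ x, eval x P = B (b.equivFun.symm x) (b.equivFun.symm x) := by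
    intro x
    simp only [P, Basis.equivFun_symm_apply, map_sum, map_smul, LinearMap.sum_apply,
      LinearMap.smul_apply, smul_eq_mul, eval_mul, eval_C, eval_X, Finset.mul_sum]
    rw [Finset.sum_comm]
    exact Finset.sum_congr rfl fun _ _ => Finset.sum_congr rfl fun _ _ => by ring
  have hdeg : P.totalDegree < Fintype.card (Fin (finrank K V)) := by
    refine lt_of_le_of_lt ?_ (by simpa using hV)
    refine (totalDegree_finsetSum _ _).trans (Finset.sup_le fun i _ => ?_)
    refine (totalDegree_finsetSum _ _).trans (Finset.sup_le fun j _ => ?_)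
    grw [totalDegree_mul, totalDegree_mul, totalDegree_C, totalDegree_X, totalDegree_X]
  obtain ⟨x, hx0, hx⟩ := exists_ne_zero_eval_eq_zero hdeg (by simp [P])
  exact ⟨b.equivFun.symm x, b.equivFun.symm.map_ne_zero_iff.mpr hx0, (hP x).symm.trans hx⟩

theorem exists_mem_notMem_apply_self_eq_zero (B : BilinForm K V) {C W : Submodule K V}
    (hCW : C ≤ W) (hdim : finrank K C + 3 ≤ finrank K W) : ∃ v ∈ W, v ∉ C ∧ B v v = 0 := by
  obtain ⟨U, hU⟩ := Submodule.exists_isCompl (C.comap W.subtype)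
  have hC : finrank K (C.comap W.subtype) = finrank K C :=
    (Submodule.comapSubtypeEquivOfLe hCW).finrank_eq
  have hU3 : 2 < finrank K U := by
    have := Submodule.finrank_add_eq_of_isCompl hU
    omega
  let f : U →ₗ[K] V := W.subtype ∘ₗ U.subtype
  obtain ⟨u, hu0, hu⟩ := exists_ne_zero_apply_self_eq_zero (B.compl₁₂ f f) hU3
  refine ⟨f u, (u : W).2, fun huC => hu0 ?_, hu⟩
  have hu' : (u : W) ∈ C.comap W.subtype ⊓ U := ⟨huC, u.2⟩
  rw [hU.inf_eq_bot, Submodule.mem_bot] at hu'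
  exact Subtype.ext hu'

theorem exists_le_orthogonal_self_finrank_eq_succ {B : BilinForm K V} (hB : B.IsRefl)
    {C : Submodule K V} (hC : C ≤ B.orthogonal C) (hdim : 2 * finrank K C + 3 ≤ finrank K V) :
    ∃ C' : Submodule K V, C ≤ C' ∧ finrank K C' = finrank K C + 1 ∧ C' ≤ B.orthogonal C' := by
  have hW : finrank K C + 3 ≤ finrank K (B.orthogonal C) := by
    have := finrank_add_finrank_orthogonal' (B := B) C
    omega
  obtain ⟨v, hvW, hvC, hv⟩ := exists_mem_notMem_apply_self_eq_zero B hC hW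
  exact ⟨C ⊔ K ∙ v, le_sup_left, Submodule.finrank_sup_span_singleton hvC,
    sup_span_singleton_le_orthogonal hB hC hvW hv⟩

end LinearMap.BilinForm

theorem stmt8_general (F : Type) [Field F] [Fintype F]
    (n k : ℕ) (hn : n ≥ 2 * k + 3)
    (C : Submodule F (Fin n → F)) (hdim : Module.finrank F C = k)
    (hso : ∀ x ∈ C, ∀ y ∈ C, ∑ i, x i * y i = 0) :
    ∃ C' : Submodule F (Fin n → F), C ≤ C' ∧ Module.finrank F C' = k + 1 ∧
      ∀ x ∈ C', ∀ y ∈ C', ∑ i, x i * y i = 0 := by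
  have hB : (dotProductBilin F F : BilinForm F (Fin n → F)).IsRefl :=
    fun x y h => by simpa [dotProduct_comm] using h
  obtain ⟨C', hCC', hdim', hC'⟩ := LinearMap.BilinForm.exists_le_orthogonal_self_finrank_eq_succ hB
    (fun y hy x hx => hso x hx y hy) (by simpa [hdim] using hn)
  exact ⟨C', hCC', hdim ▸ hdim', fun x hx y hy => hC' hy x hx⟩

/-- over F_q with q = p^m, p an odd prime, every k-dimensional Euclidean
self-orthogonal subspace of F_q^n with n ≥ 2k+3 extends to a (k+1)-dimensional one. -/
theorem stmt8 (p m : ℕ) (hp : p.Prime) (hodd : Odd p) (hm : 0 < m)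
    (F : Type) [Field F] [Fintype F] (hF : Fintype.card F = p ^ m)
    (n k : ℕ) (hn : n ≥ 2 * k + 3)
    (C : Submodule F (Fin n → F)) (hdim : Module.finrank F C = k)
    (hso : ∀ x ∈ C, ∀ y ∈ C, ∑ i, x i * y i = 0) :
    ∃ C' : Submodule F (Fin n → F), C ≤ C' ∧ Module.finrank F C' = k + 1 ∧
      ∀ x ∈ C', ∀ y ∈ C', ∑ i, x i * y i = 0 :=
  stmt8_general F n k hn C hdim hso
end
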